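/- arXiv:1701.05966 — 2 statements merged into one kernel-verified Lean document; each statement's English description precedes it below -/
import Mathlib

section
/- Let (M, g) be a functional setting where ζ satisfies Normalization, Vanishing on displaceable-supported functions, and the Poisson bracket inequality |ζ(f+g) − ζ(f) − ζ(g)| ≤ √(2 S(f,g) ‖{f,g}‖) with S(f,g) ≤ w for all relevant pairs. If F₁, …, F_N is a partition of unity on M with each supp(F_i) displaceable and the partial sums G_k = F₁ + ⋯ + F_k satisfy ‖{G_k, F_{k+1}}‖ ≤ pb(F) for all k, then 1 ≤ N √(2 w · pb(F)), i.e. pb(F) ≥ 1/(2 N² w). -/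
open Finset

/-! The value of `ζ` on the partial sums `G_k = F_1 + ⋯ + F_k` grows by at most
`c = √(2 w pb(F))` per step: the Poisson bracket inequality for the pair `(G_k, F_{k+1})` bounds
the defect of additivity by `c`, and `ζ(F_{k+1}) = 0`. Hence `1 = ζ(1) = ζ(G_N) ≤ (N - 1) c`. -/

lemma apply_sum_Icc_le_of_add_defect_le {α : Type*} [AddCommMonoid α] (ζ : α → ℝ)
    (F : ℕ → α) (N : ℕ) (c : ℝ)
    (hvanish : ∀ k, 1 ≤ k → k ≤ N → ζ (F k) = 0)
    (hdefect : ∀ k, 1 ≤ k → k < N →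
      ζ (∑ i ∈ Icc 1 k, F i + F (k + 1)) - ζ (∑ i ∈ Icc 1 k, F i) - ζ (F (k + 1)) ≤ c) :
    ∀ k, 1 ≤ k → k ≤ N → ζ (∑ i ∈ Icc 1 k, F i) ≤ (k - 1 : ℝ) * c := by
  intro k hk
  induction k, hk using Nat.le_induction with
  | base => intro h1N; simp [hvanish 1 le_rfl h1N]
  | succ k hk ih =>
    intro (hkN : k < N)
    rw [sum_Icc_succ_top (by omega)]
    have hstep := hdefect k hk hkN
    have hprev := ih hkN.le
    have hnext := hvanish (k + 1) (by omega) hkN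
    push_cast
    linarith

lemma one_div_two_mul_sq_mul_le_of_one_le_mul_sqrt {n w p : ℝ} (hw : 0 < w)
    (h : 1 ≤ n * √(2 * w * p)) : 1 / (2 * n ^ 2 * w) ≤ p := by
  have hsqrt : 0 < √(2 * w * p) := by
    refine (Real.sqrt_nonneg _).lt_of_ne fun h0 => ?_
    rw [← h0, mul_zero] at h
    norm_num at h
  have hwp : 0 < 2 * w * p := Real.sqrt_pos.mp hsqrt
  have hn : n ≠ 0 := by rintro rfl; norm_num at h
  have hsq : 1 ≤ n ^ 2 * (2 * w * p) := by
    calc (1 : ℝ) ≤ (n * √(2 * w * p)) ^ 2 := by nlinarith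
      _ = n ^ 2 * (2 * w * p) := by rw [mul_pow, Real.sq_sqrt hwp.le]
  rw [div_le_iff₀ (by positivity)]
  linarith

theorem polterovich_lower_bound_general {M : Type*}
    (ζ : (M → ℝ) → ℝ) (S : (M → ℝ) → (M → ℝ) → ℝ) (nbr : (M → ℝ) → (M → ℝ) → ℝ)
    (hnbr0 : ∀ f g, 0 ≤ nbr f g)
    (hPB : ∀ f g : M → ℝ, |ζ (f + g) - ζ f - ζ g| ≤ Real.sqrt (2 * S f g * nbr f g))
    (hone : ζ 1 = 1)
    (N : ℕ) (hN : 1 ≤ N) (F : ℕ → (M → ℝ))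
    (hpart : (∑ k ∈ Finset.Icc 1 N, F k) = 1)
    (hvanish : ∀ k, 1 ≤ k → k ≤ N → ζ (F k) = 0)
    (w : ℝ) (hw : 0 < w) (pbF : ℝ)
    (hSw : ∀ k, 1 ≤ k → k < N → S (∑ i ∈ Finset.Icc 1 k, F i) (F (k + 1)) ≤ w)
    (hnbrpb : ∀ k, 1 ≤ k → k < N →
      nbr (∑ i ∈ Finset.Icc 1 k, F i) (F (k + 1)) ≤ pbF) :
    1 ≤ (N : ℝ) * Real.sqrt (2 * w * pbF) ∧ 1 / (2 * (N : ℝ) ^ 2 * w) ≤ pbF := by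
  have hdefect : ∀ k, 1 ≤ k → k < N →
      ζ (∑ i ∈ Icc 1 k, F i + F (k + 1)) - ζ (∑ i ∈ Icc 1 k, F i) - ζ (F (k + 1))
        ≤ √(2 * w * pbF) := by
    intro k hk hkN
    refine (le_abs_self _).trans <| (hPB _ _).trans <| Real.sqrt_le_sqrt ?_
    have := mul_le_mul (hSw k hk hkN) (hnbrpb k hk hkN) (hnbr0 _ _) hw.le
    linarith
  have hG := apply_sum_Icc_le_of_add_defect_le ζ F N _ hvanish hdefect N hN le_rfl
  rw [hpart, hone] at hG
  have hbound : 1 ≤ (N : ℝ) * √(2 * w * pbF) := by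
    nlinarith [Real.sqrt_nonneg (2 * w * pbF)]
  exact ⟨hbound, one_div_two_mul_sq_mul_le_of_one_le_mul_sqrt hw hbound⟩

/-- Polterovich's lower bound (abstract form). Let `ζ` satisfy normalization,
vanishing on the members `F_k` of a partition of unity with displaceable supports,
and the Poisson bracket inequality
`|ζ(f+g) − ζ(f) − ζ(g)| ≤ √(2 S(f,g) ‖{f,g}‖)`. If for the partial sums
`G_k = F_1 + ⋯ + F_k` one has `S(G_k, F_{k+1}) ≤ w` and
`‖{G_k, F_{k+1}}‖ ≤ pb(F)`, then `1 ≤ N √(2 w pb(F))`, i.e.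
`pb(F) ≥ 1/(2 N² w)`. -/
theorem polterovich_lower_bound {M : Type*}
    (ζ : (M → ℝ) → ℝ) (S : (M → ℝ) → (M → ℝ) → ℝ) (nbr : (M → ℝ) → (M → ℝ) → ℝ)
    (hS0 : ∀ f g, 0 ≤ S f g) (hnbr0 : ∀ f g, 0 ≤ nbr f g)
    (hPB : ∀ f g : M → ℝ, |ζ (f + g) - ζ f - ζ g| ≤ Real.sqrt (2 * S f g * nbr f g))
    (hone : ζ 1 = 1)
    (N : ℕ) (hN : 1 ≤ N) (F : ℕ → (M → ℝ))
    (hFnn : ∀ k, 1 ≤ k → k ≤ N → ∀ x, 0 ≤ F k x)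
    (hpart : (∑ k ∈ Finset.Icc 1 N, F k) = 1)
    (hvanish : ∀ k, 1 ≤ k → k ≤ N → ζ (F k) = 0)
    (w : ℝ) (hw : 0 < w) (pbF : ℝ) (hpbF : 0 ≤ pbF)
    (hSw : ∀ k, 1 ≤ k → k < N → S (∑ i ∈ Finset.Icc 1 k, F i) (F (k + 1)) ≤ w)
    (hnbrpb : ∀ k, 1 ≤ k → k < N →
      nbr (∑ i ∈ Finset.Icc 1 k, F i) (F (k + 1)) ≤ pbF) :
    1 ≤ (N : ℝ) * Real.sqrt (2 * w * pbF) ∧ 1 / (2 * (N : ℝ) ^ 2 * w) ≤ pbF :=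
  polterovich_lower_bound_general ζ S nbr hnbr0 hPB hone N hN F hpart hvanish w hw pbF hSw hnbrpb
end

section
/- The Hilbert space-filling curve c_H : [0,1] → [0,1]² is measure-preserving: the pushforward of the Lebesgue probability measure on [0,1] under c_H equals the Lebesgue probability measure on [0,1]². In particular, c_H maps each dyadic interval [m/4ⁿ, (m+1)/4ⁿ] onto a dyadic square of area 1/4ⁿ, and μ₁(c_H⁻¹(E)) = μ₂(E) for every Borel set E ⊆ [0,1]². -/
/-!
The `m`-th interval of level `n` is mapped onto some square of level `n`; level `0` says that the
curve maps `[0,1]` onto `[0,1]²`, so every square of level `n` is hit (look at its centre), and as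
there are `4ⁿ` intervals and `4ⁿ` squares, `m ↦ square` is a bijection. Hence the preimage of the
quadrant `(-∞,a] × (-∞,b]` contains `⌊2ⁿa⌋⌊2ⁿb⌋` intervals of length `4⁻ⁿ` and is covered by
`(⌊2ⁿa⌋+1)(⌊2ⁿb⌋+1)` of them, and these intervals overlap only at endpoints. Letting `n → ∞` gives
measure `ab`, and a finite measure on the plane is determined by its values on quadrants.
-/

open MeasureTheory Set Filter Topology

def gridInterval (d : ℝ) (m : ℕ) : Set ℝ := Icc (m / d) ((m + 1) / d)

section gridInterval

variable {d : ℝ} {m : ℕ}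

theorem volume_gridInterval (d : ℝ) (m : ℕ) :
    volume (gridInterval d m) = ENNReal.ofReal d⁻¹ := by
  rw [gridInterval, Real.volume_Icc]
  congr 1
  ring

theorem gridInterval_subset_unitInterval (hm : (m : ℝ) + 1 ≤ d) :
    gridInterval d m ⊆ Icc 0 1 := by
  have hd : 0 < d := by linarith [m.cast_nonneg (α := ℝ)]
  exact Icc_subset_Icc (by positivity) ((div_le_one hd).2 hm)

theorem exists_mem_gridInterval {N : ℕ} (hN : 0 < N) {x : ℝ} (hx : x ∈ Icc (0 : ℝ) 1) :
    ∃ m < N, x ∈ gridInterval N m := by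
  have hN' : (0 : ℝ) < N := by exact_mod_cast hN
  have hxN : 0 ≤ x * N := mul_nonneg hx.1 hN'.le
  refine ⟨min ⌊x * N⌋₊ (N - 1), by omega, ?_, ?_⟩
  · rw [div_le_iff₀ hN']
    exact (Nat.cast_le.2 (min_le_left _ _)).trans (Nat.floor_le hxN)
  · rw [le_div_iff₀ hN']
    rcases le_total ⌊x * N⌋₊ (N - 1) with h | h
    · rw [min_eq_left h]
      exact (Nat.lt_floor_add_one _).le
    · rw [min_eq_right h, Nat.cast_sub (by omega), Nat.cast_one, sub_add_cancel]
      nlinarith [hx.2]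

theorem midpoint_mem_gridInterval (hd : 0 < d) (m : ℕ) :
    ((m : ℝ) + 2⁻¹) / d ∈ gridInterval d m :=
  ⟨by gcongr; norm_num, by gcongr; norm_num⟩

theorem eq_of_midpoint_mem_gridInterval (hd : 0 < d) {i j : ℕ}
    (h : ((i : ℝ) + 2⁻¹) / d ∈ gridInterval d j) : j = i := by
  obtain ⟨hj, hi⟩ := h
  rw [div_le_div_iff_of_pos_right hd] at hj hi
  have hji : (j : ℝ) < i + 1 := by linarith
  have hij : (i : ℝ) < j + 1 := by linarith
  norm_cast at hji hij
  omega

theorem aedisjoint_gridInterval (hd : 0 < d) {u w : ℕ} (h : u ≠ w) :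
    AEDisjoint volume (gridInterval d u) (gridInterval d w) := by
  wlog huw : u < w generalizing u w
  · exact (this h.symm (h.lt_or_gt.resolve_left huw)).symm
  refine measure_mono_null (fun x hx => ?_) (measure_singleton ((w : ℝ) / d))
  have : ((u : ℝ) + 1) / d ≤ w / d := by gcongr; exact_mod_cast huw
  exact le_antisymm (hx.1.2.trans this) hx.2.1

theorem volume_biUnion_gridInterval (hd : 0 < d) (s : Finset ℕ) :
    volume (⋃ m ∈ s, gridInterval d m) = s.card * ENNReal.ofReal d⁻¹ := by
  rw [measure_biUnion_finset₀ (fun u _ w _ h => aedisjoint_gridInterval hd h)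
    (fun _ _ => measurableSet_Icc.nullMeasurableSet)]
  simp [volume_gridInterval]

theorem le_floor_of_mem_gridInterval (hd : 0 < d) {x a : ℝ} (hx : x ∈ gridInterval d m)
    (hxa : x ≤ a) : m ≤ ⌊a * d⌋₊ :=
  Nat.le_floor ((div_le_iff₀ hd).1 (hx.1.trans hxa))

theorem gridInterval_subset_Iic (hd : 0 < d) {a : ℝ} (hm : m < ⌊a * d⌋₊) :
    gridInterval d m ⊆ Iic a := by
  have h := (Nat.le_floor_iff' m.succ_ne_zero).1 hm
  push_cast at h
  exact fun x hx => hx.2.trans ((div_le_iff₀ hd).2 h)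

end gridInterval

theorem ofReal_div_two_pow_mul_div_two_pow (n k l : ℕ) :
    ENNReal.ofReal ((k / 2 ^ n) * (l / 2 ^ n)) = (k * l : ℕ) * ENNReal.ofReal ((4 : ℝ) ^ n)⁻¹ := by
  rw [← ENNReal.ofReal_natCast, ← ENNReal.ofReal_mul (by positivity),
    ← (by norm_num : (2 : ℝ) * 2 = 4), mul_pow]
  push_cast
  congr 1
  ring

theorem tendsto_nat_floor_mul_two_pow_add_div {a : ℝ} (ha : 0 ≤ a) (t : ℝ) :
    Tendsto (fun n : ℕ => ((⌊a * 2 ^ n⌋₊ : ℝ) + t) / 2 ^ n) atTop (𝓝 a) := by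
  have h2 := tendsto_pow_atTop_atTop_of_one_lt (one_lt_two (α := ℝ))
  simpa [add_div, div_eq_mul_inv t] using
    ((tendsto_nat_floor_mul_div_atTop ha).comp h2).add
      ((tendsto_inv_atTop_zero.comp h2).const_mul t)

def Real.finiteSpanningSetsInIic (μ : Measure ℝ) [IsFiniteMeasure μ] :
    μ.FiniteSpanningSetsIn (range Iic) where
  set n := Iic (n : ℝ)
  set_mem _ := mem_range_self _
  finite _ := measure_lt_top μ _
  spanning := iUnion_Iic_of_not_bddAbove_range <| not_bddAbove_iff.2 fun x =>
    let ⟨n, hn⟩ := exists_nat_gt x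
    ⟨n, mem_range_self n, hn⟩

theorem Set.MapsTo.preimage_prod_inter {α β γ : Type*} {f : α → β × γ} {u : Set α} {v : Set β}
    {w : Set γ} (hf : MapsTo f u (v ×ˢ w)) (s : Set β) (t : Set γ) :
    f ⁻¹' (s ×ˢ t) ∩ u = f ⁻¹' ((s ∩ v) ×ˢ (t ∩ w)) ∩ u := by
  ext x
  constructor
  · rintro ⟨⟨hs, ht⟩, hx⟩
    exact ⟨⟨⟨hs, (hf hx).1⟩, ht, (hf hx).2⟩, hx⟩
  · rintro ⟨⟨⟨hs, -⟩, ht, -⟩, hx⟩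
    exact ⟨⟨hs, ht⟩, hx⟩

theorem Iic_inter_unitInterval (a : ℝ) : Iic a ∩ Icc 0 1 = Icc 0 (min a 1) := by
  ext
  simp only [mem_inter_iff, mem_Iic, mem_Icc, le_min_iff]
  tauto

def dyadicSquare (n : ℕ) (p : ℕ × ℕ) : Set (ℝ × ℝ) :=
  gridInterval (2 ^ n) p.1 ×ˢ gridInterval (2 ^ n) p.2

def HasDyadicProperty (c : ℝ → ℝ × ℝ) : Prop :=
  ∀ n m : ℕ, m < 4 ^ n → ∃ i j : ℕ, i < 2 ^ n ∧ j < 2 ^ n ∧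
    c '' gridInterval (4 ^ n) m = dyadicSquare n (i, j)

namespace HasDyadicProperty

variable {c : ℝ → ℝ × ℝ}

theorem image_unitInterval (hc : HasDyadicProperty c) :
    c '' Icc 0 1 = Icc 0 1 ×ˢ Icc 0 1 := by
  obtain ⟨i, j, hi, hj, h⟩ := hc 0 0 (by norm_num)
  obtain rfl : i = 0 := by simpa using hi
  obtain rfl : j = 0 := by simpa using hj
  simpa [dyadicSquare, gridInterval] using h

theorem mapsTo_unitInterval (hc : HasDyadicProperty c) :
    MapsTo c (Icc 0 1) (Icc 0 1 ×ˢ Icc 0 1) := by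
  rw [← hc.image_unitInterval]
  exact mapsTo_image c _

noncomputable def index (hc : HasDyadicProperty c) (n m : ℕ) : ℕ × ℕ :=
  if h : m < 4 ^ n then ((hc n m h).choose, (hc n m h).choose_spec.choose) else 0

theorem index_spec (hc : HasDyadicProperty c) {n m : ℕ} (hm : m < 4 ^ n) :
    hc.index n m ∈ Finset.range (2 ^ n) ×ˢ Finset.range (2 ^ n) ∧
      c '' gridInterval (4 ^ n) m = dyadicSquare n (hc.index n m) := by
  obtain ⟨hi, hj, h⟩ := (hc n m hm).choose_spec.choose_spec
  simp only [index, dif_pos hm, Finset.mem_product, Finset.mem_range]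
  exact ⟨⟨hi, hj⟩, h⟩

theorem mem_dyadicSquare (hc : HasDyadicProperty c) {n m : ℕ} (hm : m < 4 ^ n) {x : ℝ}
    (hx : x ∈ gridInterval (4 ^ n) m) : c x ∈ dyadicSquare n (hc.index n m) :=
  (hc.index_spec hm).2 ▸ mem_image_of_mem c hx

theorem surjOn_index (hc : HasDyadicProperty c) (n : ℕ) :
    SurjOn (hc.index n) (Finset.range (4 ^ n))
      (Finset.range (2 ^ n) ×ˢ Finset.range (2 ^ n) : Finset (ℕ × ℕ)) := by
  rintro ⟨i, j⟩ hij
  simp only [Finset.coe_product, Finset.coe_range, mem_prod, mem_Iio] at hij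
  have h2 : (0 : ℝ) < 2 ^ n := by positivity
  have hmid : ∀ k : ℕ, k < 2 ^ n → ((k : ℝ) + 2⁻¹) / 2 ^ n ∈ Icc (0 : ℝ) 1 := fun k hk =>
    gridInterval_subset_unitInterval (by exact_mod_cast hk) (midpoint_mem_gridInterval h2 k)
  obtain ⟨x, hx, hcx⟩ : (((i : ℝ) + 2⁻¹) / 2 ^ n, ((j : ℝ) + 2⁻¹) / 2 ^ n) ∈ c '' Icc 0 1 := by
    rw [hc.image_unitInterval]
    exact ⟨hmid i hij.1, hmid j hij.2⟩
  obtain ⟨m, hm, hxm⟩ := exists_mem_gridInterval (N := 4 ^ n) (by positivity) hx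
  rw [Nat.cast_pow, Nat.cast_ofNat] at hxm
  have hsq := hc.mem_dyadicSquare hm hxm
  rw [hcx] at hsq
  exact ⟨m, by simpa using hm, Prod.ext (eq_of_midpoint_mem_gridInterval h2 hsq.1)
    (eq_of_midpoint_mem_gridInterval h2 hsq.2)⟩

theorem injOn_index (hc : HasDyadicProperty c) (n : ℕ) :
    InjOn (hc.index n) (Finset.range (4 ^ n)) :=
  Finset.injOn_of_surjOn_of_card_le _ (fun _ hm => (hc.index_spec (by simpa using hm)).1)
    (hc.surjOn_index n) (by simp [← mul_pow])

noncomputable def indicesBelow (hc : HasDyadicProperty c) (n k l : ℕ) : Finset ℕ :=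
  (Finset.range (4 ^ n)).filter fun m => hc.index n m ∈ Finset.range k ×ˢ Finset.range l

theorem card_indicesBelow_le (hc : HasDyadicProperty c) (n k l : ℕ) :
    (hc.indicesBelow n k l).card ≤ k * l := by
  have := Finset.card_le_card_of_injOn (s := hc.indicesBelow n k l)
    (t := Finset.range k ×ˢ Finset.range l) (hc.index n) (fun m hm => (Finset.mem_filter.1 hm).2)
    ((hc.injOn_index n).mono (Finset.coe_subset.2 (Finset.filter_subset _ _)))
  rwa [Finset.card_product, Finset.card_range, Finset.card_range] at this

theorem le_card_indicesBelow (hc : HasDyadicProperty c) {n k l : ℕ} (hk : k ≤ 2 ^ n)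
    (hl : l ≤ 2 ^ n) : k * l ≤ (hc.indicesBelow n k l).card := by
  suffices SurjOn (hc.index n) (hc.indicesBelow n k l)
      (Finset.range k ×ˢ Finset.range l : Finset (ℕ × ℕ)) by
    simpa only [Finset.card_product, Finset.card_range] using
      Finset.card_le_card_of_surjOn _ this
  intro p hp
  obtain ⟨m, hm, rfl⟩ := hc.surjOn_index n <| Finset.coe_subset.2
    (Finset.product_subset_product (Finset.range_subset_range.2 hk)
      (Finset.range_subset_range.2 hl)) hp
  exact ⟨m, Finset.mem_filter.2 ⟨hm, by simpa using hp⟩, rfl⟩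

theorem biUnion_indicesBelow_subset (hc : HasDyadicProperty c) (n : ℕ) (a b : ℝ) :
    ⋃ m ∈ hc.indicesBelow n ⌊a * 2 ^ n⌋₊ ⌊b * 2 ^ n⌋₊, gridInterval (4 ^ n) m ⊆
      c ⁻¹' (Iic a ×ˢ Iic b) ∩ Icc 0 1 := by
  simp only [iUnion_subset_iff]
  intro m hm x hx
  simp only [indicesBelow, Finset.mem_filter, Finset.mem_product, Finset.mem_range] at hm
  have hsq := hc.mem_dyadicSquare hm.1 hx
  have h2 : (0 : ℝ) < 2 ^ n := by positivity
  exact ⟨⟨gridInterval_subset_Iic h2 hm.2.1 hsq.1, gridInterval_subset_Iic h2 hm.2.2 hsq.2⟩,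
    gridInterval_subset_unitInterval (by exact_mod_cast hm.1) hx⟩

theorem preimage_subset_biUnion_indicesBelow (hc : HasDyadicProperty c) (n : ℕ) (a b : ℝ) :
    c ⁻¹' (Iic a ×ˢ Iic b) ∩ Icc 0 1 ⊆
      ⋃ m ∈ hc.indicesBelow n (⌊a * 2 ^ n⌋₊ + 1) (⌊b * 2 ^ n⌋₊ + 1), gridInterval (4 ^ n) m := by
  rintro x ⟨hxab, hx⟩
  obtain ⟨m, hm, hxm⟩ := exists_mem_gridInterval (N := 4 ^ n) (by positivity) hx
  rw [Nat.cast_pow, Nat.cast_ofNat] at hxm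
  have hsq := hc.mem_dyadicSquare hm hxm
  have h2 : (0 : ℝ) < 2 ^ n := by positivity
  refine mem_biUnion (Finset.mem_filter.2 ⟨Finset.mem_range.2 hm, ?_⟩) hxm
  simp only [Finset.mem_product, Finset.mem_range, Nat.lt_succ_iff]
  exact ⟨le_floor_of_mem_gridInterval h2 hsq.1 hxab.1,
    le_floor_of_mem_gridInterval h2 hsq.2 hxab.2⟩


theorem ofReal_le_volume_preimage_Iic_prod_Iic (hc : HasDyadicProperty c) {a b : ℝ}
    (ha : a ∈ Icc (0 : ℝ) 1) (hb : b ∈ Icc (0 : ℝ) 1) (n : ℕ) :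
    ENNReal.ofReal ((⌊a * 2 ^ n⌋₊ / 2 ^ n) * (⌊b * 2 ^ n⌋₊ / 2 ^ n)) ≤
      volume (c ⁻¹' (Iic a ×ˢ Iic b) ∩ Icc 0 1) := by
  have floor_le : ∀ x ∈ Icc (0 : ℝ) 1, ⌊x * 2 ^ n⌋₊ ≤ 2 ^ n := fun x hx =>
    Nat.floor_le_of_le (by push_cast; nlinarith [hx.2, pow_pos (two_pos (α := ℝ)) n])
  calc _ = (⌊a * 2 ^ n⌋₊ * ⌊b * 2 ^ n⌋₊ : ℕ) * ENNReal.ofReal ((4 : ℝ) ^ n)⁻¹ :=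
        ofReal_div_two_pow_mul_div_two_pow n _ _
    _ ≤ (hc.indicesBelow n ⌊a * 2 ^ n⌋₊ ⌊b * 2 ^ n⌋₊).card * ENNReal.ofReal ((4 : ℝ) ^ n)⁻¹ := by
        gcongr
        exact hc.le_card_indicesBelow (floor_le a ha) (floor_le b hb)
    _ = volume (⋃ m ∈ hc.indicesBelow n ⌊a * 2 ^ n⌋₊ ⌊b * 2 ^ n⌋₊, gridInterval (4 ^ n) m) :=
        (volume_biUnion_gridInterval (by positivity) _).symm
    _ ≤ _ := measure_mono (hc.biUnion_indicesBelow_subset n a b)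

theorem volume_preimage_Iic_prod_Iic_le (hc : HasDyadicProperty c) (a b : ℝ) (n : ℕ) :
    volume (c ⁻¹' (Iic a ×ˢ Iic b) ∩ Icc 0 1) ≤
      ENNReal.ofReal (((⌊a * 2 ^ n⌋₊ + 1) / 2 ^ n) * ((⌊b * 2 ^ n⌋₊ + 1) / 2 ^ n)) := by
  set k := ⌊a * 2 ^ n⌋₊ + 1
  set l := ⌊b * 2 ^ n⌋₊ + 1
  calc _ ≤ volume (⋃ m ∈ hc.indicesBelow n k l, gridInterval (4 ^ n) m) :=
        measure_mono (hc.preimage_subset_biUnion_indicesBelow n a b)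
    _ = (hc.indicesBelow n k l).card * ENNReal.ofReal ((4 : ℝ) ^ n)⁻¹ :=
        volume_biUnion_gridInterval (by positivity) _
    _ ≤ (k * l : ℕ) * ENNReal.ofReal ((4 : ℝ) ^ n)⁻¹ := by
        gcongr
        exact hc.card_indicesBelow_le n k l
    _ = _ := by
        rw [← ofReal_div_two_pow_mul_div_two_pow]
        push_cast [k, l]
        rfl

theorem volume_preimage_Iic_prod_Iic (hc : HasDyadicProperty c) {a b : ℝ}
    (ha : a ∈ Icc (0 : ℝ) 1) (hb : b ∈ Icc (0 : ℝ) 1) :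
    volume (c ⁻¹' (Iic a ×ˢ Iic b) ∩ Icc 0 1) = ENNReal.ofReal a * ENNReal.ofReal b := by
  have lim : ∀ t : ℝ, Tendsto (fun n : ℕ => ENNReal.ofReal
      (((⌊a * 2 ^ n⌋₊ + t) / 2 ^ n) * ((⌊b * 2 ^ n⌋₊ + t) / 2 ^ n))) atTop
      (𝓝 (ENNReal.ofReal (a * b))) := fun t =>
    ENNReal.tendsto_ofReal ((tendsto_nat_floor_mul_two_pow_add_div ha.1 t).mul
      (tendsto_nat_floor_mul_two_pow_add_div hb.1 t))
  rw [← ENNReal.ofReal_mul ha.1]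
  exact le_antisymm (ge_of_tendsto' (lim 1) (hc.volume_preimage_Iic_prod_Iic_le a b))
    (le_of_tendsto' (by simpa using lim 0) (hc.ofReal_le_volume_preimage_Iic_prod_Iic ha hb))

theorem volume_preimage_Iic_prod_Iic_inter (hc : HasDyadicProperty c) (q r : ℝ) :
    volume (c ⁻¹' (Iic q ×ˢ Iic r) ∩ Icc 0 1) =
      volume (Iic q ∩ Icc 0 1) * volume (Iic r ∩ Icc 0 1) := by
  have hS := hc.mapsTo_unitInterval
  rw [hS.preimage_prod_inter, Iic_inter_unitInterval, Iic_inter_unitInterval]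
  rcases lt_or_ge q 0 with hq | hq
  · simp [Icc_eq_empty_of_lt (min_lt_of_left_lt hq)]
  rcases lt_or_ge r 0 with hr | hr
  · simp [Icc_eq_empty_of_lt (min_lt_of_left_lt hr)]
  have key := hc.volume_preimage_Iic_prod_Iic (a := min q 1) (b := min r 1)
    ⟨le_min hq zero_le_one, min_le_right _ _⟩ ⟨le_min hr zero_le_one, min_le_right _ _⟩
  rw [hS.preimage_prod_inter, Iic_inter_unitInterval, Iic_inter_unitInterval, min_assoc, min_self,
    min_assoc, min_self] at key
  rw [key, Real.volume_Icc, Real.volume_Icc, sub_zero, sub_zero]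

theorem map_restrict_unitInterval (hc : HasDyadicProperty c) (hmeas : Measurable c) :
    (volume.restrict (Icc 0 1)).map c = volume.restrict (Icc 0 1 ×ˢ Icc 0 1) := by
  have hgen : MeasurableSpace.generateFrom (range Iic) = (inferInstance : MeasurableSpace ℝ) :=
    (borel_eq_generateFrom_Iic ℝ).symm.trans BorelSpace.measurable_eq.symm
  rw [Measure.volume_eq_prod, ← Measure.prod_restrict]
  refine (Measure.prod_eq_generateFrom hgen hgen isPiSystem_Iic isPiSystem_Iic
    (Real.finiteSpanningSetsInIic _) (Real.finiteSpanningSetsInIic _) ?_).symm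
  rintro _ ⟨q, rfl⟩ _ ⟨r, rfl⟩
  rw [Measure.map_apply hmeas (measurableSet_Iic.prod measurableSet_Iic),
    Measure.restrict_apply (hmeas (measurableSet_Iic.prod measurableSet_Iic)),
    Measure.restrict_apply measurableSet_Iic, Measure.restrict_apply measurableSet_Iic]
  exact hc.volume_preimage_Iic_prod_Iic_inter q r

end HasDyadicProperty

theorem hilbert_curve_measure_preserving_general
    (cH : ℝ → ℝ × ℝ) (hcont : Continuous cH)
    (hdyadic : ∀ n m : ℕ, m < 4 ^ n →
      ∃ a b : ℕ, a < 2 ^ n ∧ b < 2 ^ n ∧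
        cH '' Set.Icc ((m : ℝ) / 4 ^ n) (((m : ℝ) + 1) / 4 ^ n)
          = Set.Icc ((a : ℝ) / 2 ^ n) (((a : ℝ) + 1) / 2 ^ n) ×ˢ
            Set.Icc ((b : ℝ) / 2 ^ n) (((b : ℝ) + 1) / 2 ^ n)) :
    Measure.map cH (volume.restrict (Set.Icc (0:ℝ) 1))
      = volume.restrict (Set.Icc (0:ℝ) 1 ×ˢ Set.Icc (0:ℝ) 1) ∧
    ∀ E : Set (ℝ × ℝ), MeasurableSet E → E ⊆ Set.Icc (0:ℝ) 1 ×ˢ Set.Icc (0:ℝ) 1 →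
      volume (cH ⁻¹' E ∩ Set.Icc (0:ℝ) 1) = volume E := by
  have hc : HasDyadicProperty cH := hdyadic
  have hmap := hc.map_restrict_unitInterval hcont.measurable
  refine ⟨hmap, fun E hE hES => ?_⟩
  rw [← Measure.restrict_apply (hcont.measurable hE), ← Measure.map_apply hcont.measurable hE,
    hmap, Measure.restrict_apply hE, inter_eq_self_of_subset_left hES]

/-- The Hilbert space-filling curve is measure-preserving: any continuous
surjection `c_H : [0,1] → [0,1]²` enjoying the dyadic property (each dyadic
interval `[m/4ⁿ, (m+1)/4ⁿ]` is mapped onto a dyadic square of side `1/2ⁿ`)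
pushes the Lebesgue probability measure on `[0,1]` forward to the Lebesgue
probability measure on `[0,1]²`; in particular
`μ₁(c_H⁻¹(E)) = μ₂(E)` for every Borel set `E ⊆ [0,1]²`. -/
theorem hilbert_curve_measure_preserving
    (cH : ℝ → ℝ × ℝ) (hcont : Continuous cH)
    (hsurj : cH '' Set.Icc (0:ℝ) 1 = Set.Icc (0:ℝ) 1 ×ˢ Set.Icc (0:ℝ) 1)
    (hdyadic : ∀ n m : ℕ, m < 4 ^ n →
      ∃ a b : ℕ, a < 2 ^ n ∧ b < 2 ^ n ∧
        cH '' Set.Icc ((m : ℝ) / 4 ^ n) (((m : ℝ) + 1) / 4 ^ n)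
          = Set.Icc ((a : ℝ) / 2 ^ n) (((a : ℝ) + 1) / 2 ^ n) ×ˢ
            Set.Icc ((b : ℝ) / 2 ^ n) (((b : ℝ) + 1) / 2 ^ n)) :
    Measure.map cH (volume.restrict (Set.Icc (0:ℝ) 1))
      = volume.restrict (Set.Icc (0:ℝ) 1 ×ˢ Set.Icc (0:ℝ) 1) ∧
    ∀ E : Set (ℝ × ℝ), MeasurableSet E → E ⊆ Set.Icc (0:ℝ) 1 ×ˢ Set.Icc (0:ℝ) 1 →
      volume (cH ⁻¹' E ∩ Set.Icc (0:ℝ) 1) = volume E :=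
  hilbert_curve_measure_preserving_general cH hcont hdyadic
end
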